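/- Let R be a commutative ring, let f ∈ R[X] be a polynomial, and let c ∈ R satisfy f'(c) = 0 (c is a critical point of f). Then for every n ≥ 1, the second derivative of the n-fold composition f^n = f ∘ f ∘ ⋯ ∘ f at c satisfies (f^n)''(c) = f''(c) · Π_{k=1}^{n−1} f'(f^k(c)), where f^k(c) denotes the value of the k-fold composition of f at c (and the empty product for n = 1 equals 1). -/
import Mathlib


open Polynomial

/-- The `n`-fold composition `f ∘ f ∘ ⋯ ∘ f` of a polynomial with itself
(`polyIter f 0 = X`, `polyIter f (n+1) = (polyIter f n).comp f`). -/
noncomputable def polyIter {R : Type*} [CommRing R] (f : Polynomial R) : ℕ → Polynomial R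
  | 0 => Polynomial.X
  | n + 1 => (polyIter f n).comp f

lemma polyIter_succ' {R : Type*} [CommRing R] (f : Polynomial R) (n : ℕ) :
    polyIter f (n + 1) = f.comp (polyIter f n) := by
  induction n with
  | zero => simp [polyIter]
  | succ n ih =>
    show (polyIter f (n + 1)).comp f = f.comp ((polyIter f n).comp f)
    rw [ih, comp_assoc]

lemma polyIter_deriv_eval {R : Type*} [CommRing R] (f : Polynomial R) (c : R)
    (hc : f.derivative.eval c = 0) (n : ℕ) (hn : 1 ≤ n) :
    (polyIter f n).derivative.eval c = 0 := by
  induction n with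
  | zero => omega
  | succ n ih =>
    rcases Nat.eq_or_lt_of_le hn with h | h
    · have h0 : n = 0 := by omega
      subst h0
      simp [polyIter, hc]
    · rw [polyIter_succ', derivative_comp]
      simp [ih (by omega)]

/-- If `c` is a critical point of `f` (i.e. `f'(c) = 0`), then for every `n ≥ 1`,
`(f^n)''(c) = f''(c) · ∏_{k=1}^{n-1} f'(f^k(c))`. -/
theorem stmt10 {R : Type*} [CommRing R] (f : Polynomial R) (c : R)
    (hc : f.derivative.eval c = 0) (n : ℕ) (hn : 1 ≤ n) :
    ((polyIter f n).derivative.derivative).eval c =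
      (f.derivative.derivative).eval c *
        ∏ k ∈ Finset.Ico 1 n, f.derivative.eval ((polyIter f k).eval c) := by
  induction n with
  | zero => omega
  | succ n ih =>
    rcases Nat.eq_or_lt_of_le hn with h | h
    · have : n = 0 := by omega
      subst this
      simp [polyIter]
    · have hn1 : 1 ≤ n := by omega
      rw [polyIter_succ', derivative_comp, derivative_mul, derivative_comp]
      simp only [eval_add, eval_mul, eval_comp]
      rw [polyIter_deriv_eval f c hc n hn1, ih hn1,
        Finset.prod_Ico_succ_top hn1]
      ring
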